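/- Fix integers 1 ≤ ℓ ≤ n. Define n×n real matrices A,B by A_{ij} = 2ij − i² + j² and B_{ij} = 2ij + i² − j² whenever i ≤ ℓ or j ≤ ℓ, and A_{ij} = 0, B_{ij} = 4ij whenever i > ℓ and j > ℓ. Then (A+B)_{ij} = 4ij for all i,j, so rank(A+B) = 1, and the set of pure Nash equilibria of the full game (A,B) equals { (i,i) : 1 ≤ i ≤ ℓ }, and each such (i,i) is a strict Nash equilibrium. -/
import Mathlib


/-- `(i,j)` is a strict Nash equilibrium of the full game `(A,B)`. -/
def StrictNashFull {n : ℕ} (A B : Matrix (Fin n) (Fin n) ℝ) (i j : Fin n) : Prop :=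
  (∀ i' : Fin n, i' ≠ i → A i' j < A i j) ∧ (∀ j' : Fin n, j' ≠ j → B i j' < B i j)

/-- `(i,j)` is a pure Nash equilibrium of the full game `(A,B)`. -/
def PureNashFull {n : ℕ} (A B : Matrix (Fin n) (Fin n) ℝ) (i j : Fin n) : Prop :=
  (∀ i' : Fin n, A i' j ≤ A i j) ∧ (∀ j' : Fin n, B i j' ≤ B i j)

/-- The row player's payoff matrix of the rank-one construction: with 1-based strategies
`i,j ∈ [n]`, `A i j = 2ij - i² + j²` when `i ≤ ℓ` or `j ≤ ℓ`, and `A i j = 0` otherwise. -/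
noncomputable def rankOneA (n ℓ : ℕ) : Matrix (Fin n) (Fin n) ℝ :=
  Matrix.of fun i j : Fin n =>
    if i.1 + 1 ≤ ℓ ∨ j.1 + 1 ≤ ℓ then
      2 * ((i.1 : ℝ) + 1) * ((j.1 : ℝ) + 1) - ((i.1 : ℝ) + 1) ^ 2 + ((j.1 : ℝ) + 1) ^ 2
    else 0

/-- The column player's payoff matrix of the rank-one construction: with 1-based
strategies, `B i j = 2ij + i² - j²` when `i ≤ ℓ` or `j ≤ ℓ`, and `B i j = 4ij`
otherwise. -/
noncomputable def rankOneB (n ℓ : ℕ) : Matrix (Fin n) (Fin n) ℝ :=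
  Matrix.of fun i j : Fin n =>
    if i.1 + 1 ≤ ℓ ∨ j.1 + 1 ≤ ℓ then
      2 * ((i.1 : ℝ) + 1) * ((j.1 : ℝ) + 1) + ((i.1 : ℝ) + 1) ^ 2 - ((j.1 : ℝ) + 1) ^ 2
    else 4 * ((i.1 : ℝ) + 1) * ((j.1 : ℝ) + 1)

lemma fin_ne_cast {n : ℕ} {i j : Fin n} (h : i ≠ j) : ((i.1 : ℝ)) ≠ (j.1 : ℝ) := by
  intro hc
  exact h (Fin.ext (Nat.cast_injective hc))

lemma strictNash_aux (n ℓ : ℕ) (h1 : 1 ≤ ℓ) (h2 : ℓ ≤ n) (i : Fin n) (hi : i.1 + 1 ≤ ℓ) :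
    StrictNashFull (rankOneA n ℓ) (rankOneB n ℓ) i i := by
  constructor
  · intro i' hne
    have hc := fin_ne_cast hne
    simp only [rankOneA, Matrix.of_apply, if_pos (Or.inr hi), if_pos (Or.inl hi)]
    nlinarith [sq_pos_of_ne_zero (sub_ne_zero.mpr hc)]
  · intro j' hne
    have hc := fin_ne_cast hne
    simp only [rankOneB, Matrix.of_apply, if_pos (Or.inl hi)]
    nlinarith [sq_pos_of_ne_zero (sub_ne_zero.mpr hc)]

/-- For `1 ≤ ℓ ≤ n`, the game `(A,B) = (rankOneA n ℓ, rankOneB n ℓ)`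
satisfies `(A+B) i j = 4ij` (1-based), hence `rank (A+B) = 1`; its pure Nash equilibria
are exactly the diagonal profiles `(i,i)` with `i ≤ ℓ`, and each of these is a strict
Nash equilibrium. -/
theorem rank_one_construction (n ℓ : ℕ) (h1 : 1 ≤ ℓ) (h2 : ℓ ≤ n) :
    (∀ i j : Fin n,
      (rankOneA n ℓ + rankOneB n ℓ) i j = 4 * ((i.1 : ℝ) + 1) * ((j.1 : ℝ) + 1)) ∧
    (rankOneA n ℓ + rankOneB n ℓ).rank = 1 ∧
    (∀ i j : Fin n,
      PureNashFull (rankOneA n ℓ) (rankOneB n ℓ) i j ↔ i = j ∧ i.1 + 1 ≤ ℓ) ∧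
    (∀ i : Fin n, i.1 + 1 ≤ ℓ → StrictNashFull (rankOneA n ℓ) (rankOneB n ℓ) i i) := by
  have hn : 0 < n := lt_of_lt_of_le h1 h2
  have hsum : ∀ i j : Fin n,
      (rankOneA n ℓ + rankOneB n ℓ) i j = 4 * ((i.1 : ℝ) + 1) * ((j.1 : ℝ) + 1) := by
    intro i j
    simp only [Matrix.add_apply, rankOneA, rankOneB, Matrix.of_apply]
    by_cases h : i.1 + 1 ≤ ℓ ∨ j.1 + 1 ≤ ℓ
    · rw [if_pos h, if_pos h]; ring
    · rw [if_neg h, if_neg h] <;> try ring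
  refine ⟨hsum, ?_, ?_, fun i hi => strictNash_aux n ℓ h1 h2 i hi⟩
  · -- rank = 1
    set M := rankOneA n ℓ + rankOneB n ℓ with hM
    have hfac : M = (Matrix.of fun i (_ : Fin 1) => 4 * ((i.1 : ℝ) + 1)) *
        (Matrix.of fun (_ : Fin 1) j => ((j.1 : ℝ) + 1)) := by
      ext i j
      rw [hsum i j]
      simp [Matrix.mul_apply]
      try ring
    have hle : M.rank ≤ 1 := by
      rw [hfac]
      calc _ ≤ (Matrix.of fun (_ : Fin 1) (j : Fin n) => ((j.1 : ℝ) + 1)).rank :=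
            Matrix.rank_mul_le_right _ _
        _ ≤ Fintype.card (Fin 1) := Matrix.rank_le_card_height _
        _ = 1 := by simp
    have hge : M.rank ≠ 0 := by
      intro h0
      have hbot : LinearMap.range M.mulVecLin = ⊥ := by
        have := Submodule.finrank_eq_zero.mp h0
        exact this
      have hz := LinearMap.range_eq_bot.mp hbot
      have h4 : M.mulVecLin (Pi.single (⟨0, hn⟩ : Fin n) 1) = 0 := by rw [hz]; rfl
      have := congrFun h4 ⟨0, hn⟩
      rw [Matrix.mulVecLin_apply, Matrix.mulVec_single] at this
      have hMval := hsum ⟨0, hn⟩ ⟨0, hn⟩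
      simp at this hMval
      rw [hMval] at this
      norm_num at this
    omega
  · intro i j
    constructor
    · rintro ⟨hA, hB⟩
      by_cases hj : j.1 + 1 ≤ ℓ
      · -- compare with row j
        have h := hA j
        simp only [rankOneA, Matrix.of_apply, if_pos (Or.inr hj)] at h
        have hij : (i.1 : ℝ) = (j.1 : ℝ) := by nlinarith [sq_nonneg ((i.1 : ℝ) - (j.1 : ℝ))]
        have : i = j := Fin.ext (Nat.cast_injective hij)
        exact ⟨this, this ▸ hj⟩
      · exfalso
        by_cases hi : i.1 + 1 ≤ ℓ
        · have h := hB i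
          simp only [rankOneB, Matrix.of_apply, if_pos (Or.inl hi)] at h
          have hij : (j.1 : ℝ) = (i.1 : ℝ) := by nlinarith [sq_nonneg ((j.1 : ℝ) - (i.1 : ℝ))]
          have : j = i := Fin.ext (Nat.cast_injective hij)
          exact hj (this ▸ hi)
        · have e1 : rankOneA n ℓ i j = 0 := by
            simp only [rankOneA, Matrix.of_apply]
            rw [if_neg (by push_neg; exact ⟨lt_of_not_ge hi, lt_of_not_ge hj⟩)]
          have e2 : rankOneA n ℓ ⟨0, hn⟩ j =
              2 * ((0 : ℝ) + 1) * ((j.1 : ℝ) + 1) - ((0 : ℝ) + 1) ^ 2 + ((j.1 : ℝ) + 1) ^ 2 := by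
            simp only [rankOneA, Matrix.of_apply]
            rw [if_pos (Or.inl (by simpa using h1))]
            norm_num
          have h := hA ⟨0, hn⟩
          rw [e1, e2] at h
          have hj0 : (0 : ℝ) ≤ (j.1 : ℝ) := Nat.cast_nonneg _
          nlinarith
    · rintro ⟨rfl, hi⟩
      obtain ⟨hA, hB⟩ := strictNash_aux n ℓ h1 h2 i hi
      refine ⟨fun i' => ?_, fun j' => ?_⟩
      · by_cases h : i' = i
        · exact h ▸ le_refl _
        · exact (hA i' h).le
      · by_cases h : j' = i
        · exact h ▸ le_refl _
        · exact (hB j' h).le
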